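/- arXiv:1304.5010 — 5 statements merged into one kernel-verified Lean document; each statement's English description precedes it below -/
import Mathlib

section
/- Let G be a finite group and let ρ be a nontrivial irreducible unitary representation of G. Then the operator norm of the average over g ∈ G of the projections Π_g^ρ satisfies ‖ (1/|G|) Σ_{g∈G} Π_g^ρ ‖ ≤ 1 − φ(|G|)/|G|, where φ denotes Euler's totient function. -/
open scoped BigOperators

/-- The operator (ℓ²→ℓ²) norm of a square complex matrix. -/
noncomputable def matOpNorm {m : Type*} [Fintype m] [DecidableEq m] (M : Matrix m m ℂ) : ℝ :=
  ‖Matrix.toEuclideanCLM (𝕜 := ℂ) M‖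

/-- A subspace invariant under every `ρ g`. -/
def RepInvariant {G : Type*} [Group G] {d : ℕ} (ρ : G →* Matrix.unitaryGroup (Fin d) ℂ)
    (W : Submodule ℂ (Fin d → ℂ)) : Prop :=
  ∀ g : G, ∀ v ∈ W, Matrix.mulVec (ρ g : Matrix (Fin d) (Fin d) ℂ) v ∈ W

/-- Irreducibility: the only invariant subspaces are `⊥` and `⊤`. -/
def IsIrreducibleRep {G : Type*} [Group G] {d : ℕ}
    (ρ : G →* Matrix.unitaryGroup (Fin d) ℂ) : Prop :=
  ∀ W : Submodule ℂ (Fin d → ℂ), RepInvariant ρ W → W = ⊥ ∨ W = ⊤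

/-- Nontriviality: `ρ x ≠ I` for some `x`. -/
def IsNontrivialRep {G : Type*} [Group G] {d : ℕ}
    (ρ : G →* Matrix.unitaryGroup (Fin d) ℂ) : Prop :=
  ∃ x : G, (ρ x : Matrix (Fin d) (Fin d) ℂ) ≠ 1

/-- The average `(1/|S|) ∑_{x∈S} ρ(x)` of a representation over a multiset. -/
noncomputable def repAvg {G : Type*} [Group G] {d : ℕ}
    (ρ : G →* Matrix.unitaryGroup (Fin d) ℂ) (S : Multiset G) : Matrix (Fin d) (Fin d) ℂ :=
  (S.card : ℂ)⁻¹ • (S.map fun x => (ρ x : Matrix (Fin d) (Fin d) ℂ)).sum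

/-- A multiset `S` over a finite group is `ε`-biased if every nontrivial irreducible unitary
representation averages to an operator of norm at most `ε` over `S`. -/
def IsEpsBiased {G : Type*} [Group G] (S : Multiset G) (ε : ℝ) : Prop :=
  ∀ (d : ℕ), 0 < d → ∀ ρ : G →* Matrix.unitaryGroup (Fin d) ℂ,
    IsIrreducibleRep ρ → IsNontrivialRep ρ → matOpNorm (repAvg ρ S) ≤ ε

/-- `Π_g^ρ = (1/|G|) ∑_{t=0}^{|G|-1} ρ(g^t)`, the average of `ρ` over the cyclic
subgroup generated by `g`. -/
noncomputable def cyclicProj {G : Type*} [Group G] [Fintype G] {d : ℕ}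
    (ρ : G →* Matrix.unitaryGroup (Fin d) ℂ) (g : G) : Matrix (Fin d) (Fin d) ℂ :=
  (Fintype.card G : ℂ)⁻¹ •
    ∑ t ∈ Finset.range (Fintype.card G), (ρ (g ^ t) : Matrix (Fin d) (Fin d) ℂ)

/-!
Averaging `Π_g` over `g` gives `|G|⁻² ∑_{t < |G|} ∑_g ρ(g^t)`. For `t` coprime to `|G|` the map
`g ↦ g^t` is a bijection of `G`, so the inner sum is `∑_g ρ(g)`; it vanishes, since its columns
are vectors fixed by every `ρ(h)` and a nontrivial irreducible `ρ` fixes no nonzero vector. The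
other `|G| - φ(|G|)` inner sums are sums of `|G|` unitaries, of norm at most `|G|`.
-/

section MatOpNorm

variable {m : Type*} [Fintype m] [DecidableEq m]

lemma matOpNorm_smul (c : ℂ) (M : Matrix m m ℂ) : matOpNorm (c • M) = ‖c‖ * matOpNorm M := by
  rw [matOpNorm, matOpNorm, map_smul, norm_smul]

lemma matOpNorm_sum_le {ι : Type*} (s : Finset ι) (M : ι → Matrix m m ℂ) :
    matOpNorm (∑ i ∈ s, M i) ≤ ∑ i ∈ s, matOpNorm (M i) := by
  rw [matOpNorm, map_sum]
  exact norm_sum_le _ _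

lemma matOpNorm_le_one_of_mem_unitaryGroup {U : Matrix m m ℂ}
    (hU : U ∈ Matrix.unitaryGroup m ℂ) : matOpNorm U ≤ 1 := by
  -- `CStarRing.norm_coe_unitary` would need `m` nonempty; `‖U * 1‖ = ‖1‖ ≤ 1` does not.
  have hU' : Matrix.toEuclideanCLM (𝕜 := ℂ) U ∈ unitary _ := Unitary.map_mem _ hU
  calc matOpNorm U = ‖Matrix.toEuclideanCLM (𝕜 := ℂ) U * 1‖ := by rw [matOpNorm, mul_one]
    _ = ‖(1 : EuclideanSpace ℂ m →L[ℂ] EuclideanSpace ℂ m)‖ :=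
      CStarRing.norm_mem_unitary_mul _ hU'
    _ ≤ 1 := ContinuousLinearMap.norm_id_le

end MatOpNorm

section Representation

variable {G : Type*} [Group G] {d : ℕ}

def repFixedSubmodule (ρ : G →* Matrix.unitaryGroup (Fin d) ℂ) : Submodule ℂ (Fin d → ℂ) where
  carrier := {v | ∀ g, Matrix.mulVec (ρ g : Matrix (Fin d) (Fin d) ℂ) v = v}
  add_mem' hv hw g := by simp only [Matrix.mulVec_add, hv g, hw g]
  zero_mem' _ := Matrix.mulVec_zero _
  smul_mem' c v hv g := by simp only [Matrix.mulVec_smul, hv g]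

variable (ρ : G →* Matrix.unitaryGroup (Fin d) ℂ)

lemma repInvariant_repFixedSubmodule : RepInvariant ρ (repFixedSubmodule ρ) :=
  fun g v hv => by rwa [hv g]

lemma repFixedSubmodule_eq_bot (hirr : IsIrreducibleRep ρ) (hnt : IsNontrivialRep ρ) :
    repFixedSubmodule ρ = ⊥ := by
  refine (hirr _ (repInvariant_repFixedSubmodule ρ)).resolve_right fun htop => ?_
  obtain ⟨x, hx⟩ := hnt
  refine hx (Matrix.ext_iff_mulVec.mpr fun v => ?_)
  rw [Matrix.one_mulVec]
  exact (htop ▸ Submodule.mem_top : v ∈ repFixedSubmodule ρ) x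

variable [Fintype G]

lemma sum_rep_mulVec_mem_repFixedSubmodule (v : Fin d → ℂ) :
    Matrix.mulVec (∑ g : G, (ρ g : Matrix (Fin d) (Fin d) ℂ)) v ∈ repFixedSubmodule ρ := by
  intro h
  rw [Matrix.mulVec_mulVec, Finset.mul_sum]
  congr 1
  exact Fintype.sum_equiv (Equiv.mulLeft h) _ _ fun g => by simp

lemma sum_rep_eq_zero (hirr : IsIrreducibleRep ρ) (hnt : IsNontrivialRep ρ) :
    ∑ g : G, (ρ g : Matrix (Fin d) (Fin d) ℂ) = 0 := by
  refine Matrix.ext_iff_mulVec.mpr fun v => ?_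
  have hv := sum_rep_mulVec_mem_repFixedSubmodule ρ v
  rwa [repFixedSubmodule_eq_bot ρ hirr hnt, Submodule.mem_bot, ← Matrix.zero_mulVec v] at hv

lemma sum_rep_pow_of_coprime {t : ℕ} (h : (Fintype.card G).Coprime t) :
    ∑ g : G, (ρ (g ^ t) : Matrix (Fin d) (Fin d) ℂ) = ∑ g : G, (ρ g : Matrix (Fin d) (Fin d) ℂ) :=
  Fintype.sum_equiv (powCoprime (Nat.card_eq_fintype_card (α := G) ▸ h)) _ _ fun _ => rfl

lemma matOpNorm_sum_rep_pow_le (t : ℕ) :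
    matOpNorm (∑ g : G, (ρ (g ^ t) : Matrix (Fin d) (Fin d) ℂ)) ≤ Fintype.card G :=
  calc _ ≤ ∑ g : G, matOpNorm (ρ (g ^ t) : Matrix (Fin d) (Fin d) ℂ) := matOpNorm_sum_le _ _
    _ ≤ ∑ _g : G, (1 : ℝ) :=
      Finset.sum_le_sum fun g _ => matOpNorm_le_one_of_mem_unitaryGroup (ρ (g ^ t)).prop
    _ = Fintype.card G := by simp

lemma sum_cyclicProj_eq :
    ∑ g : G, cyclicProj ρ g = (Fintype.card G : ℂ)⁻¹ •
      ∑ t ∈ Finset.range (Fintype.card G), ∑ g : G, (ρ (g ^ t) : Matrix (Fin d) (Fin d) ℂ) := by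
  simp only [cyclicProj, ← Finset.smul_sum]
  rw [Finset.sum_comm]

end Representation

lemma sum_range_ite_coprime (n : ℕ) (c : ℝ) :
    ∑ t ∈ Finset.range n, (if n.Coprime t then 0 else c) = (n - n.totient) * c := by
  have hcard : (n.totient : ℝ) + ((Finset.range n).filter (¬n.Coprime ·)).card = n := by
    exact_mod_cast Finset.card_range n ▸
      Finset.card_filter_add_card_filter_not (s := Finset.range n) n.Coprime
  rw [Finset.sum_ite, Finset.sum_const_zero, zero_add, Finset.sum_const, nsmul_eq_mul, ← hcard,
    add_sub_cancel_left]

/-- Lemma 5 of the paper: for a nontrivial irreducible unitary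
representation `ρ` of a finite group `G`,
`‖(1/|G|) ∑_{g∈G} Π_g^ρ‖ ≤ 1 − φ(|G|)/|G|`. -/
theorem norm_avg_cyclicProj_le {G : Type*} [Group G] [Fintype G] {d : ℕ}
    (ρ : G →* Matrix.unitaryGroup (Fin d) ℂ)
    (hirr : IsIrreducibleRep ρ) (hnt : IsNontrivialRep ρ) :
    matOpNorm ((Fintype.card G : ℂ)⁻¹ • ∑ g : G, cyclicProj ρ g) ≤
      1 - (Nat.totient (Fintype.card G) : ℝ) / (Fintype.card G : ℝ) := by
  set n := Fintype.card G
  have hterm (t : ℕ) : matOpNorm (∑ g : G, (ρ (g ^ t) : Matrix (Fin d) (Fin d) ℂ)) ≤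
      if n.Coprime t then 0 else (n : ℝ) := by
    split_ifs with hcop
    · rw [sum_rep_pow_of_coprime ρ hcop, sum_rep_eq_zero ρ hirr hnt, matOpNorm, map_zero,
        norm_zero]
    · exact matOpNorm_sum_rep_pow_le ρ t
  calc _ = (n : ℝ)⁻¹ * (n : ℝ)⁻¹ *
        matOpNorm (∑ t ∈ Finset.range n, ∑ g : G, (ρ (g ^ t) : Matrix (Fin d) (Fin d) ℂ)) := by
        rw [sum_cyclicProj_eq, matOpNorm_smul, matOpNorm_smul, norm_inv, Complex.norm_natCast,
          mul_assoc]
    _ ≤ (n : ℝ)⁻¹ * (n : ℝ)⁻¹ * ∑ t ∈ Finset.range n, if n.Coprime t then 0 else (n : ℝ) := by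
        gcongr
        exact (matOpNorm_sum_le _ _).trans (Finset.sum_le_sum fun t _ => hterm t)
    _ = 1 - (n.totient : ℝ) / n := by
        have hn : (n : ℝ) ≠ 0 := Nat.cast_ne_zero.mpr Fintype.card_ne_zero
        rw [sum_range_ite_coprime]
        field_simp
end

section
/- Let Γ = (U, V; E) be a bipartite (n, d, λ)-expander. Associate with each vertex s ∈ U ∪ V a vector x^s in a finite-dimensional complex Hilbert space such that Σ_{u∈U} x^u = 0 and Σ_{v∈V} x^v = 0. Then | (1/(nd)) Σ_{(u,v)∈E} ⟨x^u, x^v⟩ | ≤ λ · (1/(2n)) Σ_{s∈U∪V} ‖x^s‖². -/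
open scoped BigOperators

/-- The action of the normalized adjacency matrix `M = A/d` of a bipartite graph with
edge set `E ⊆ U × V` on a vector `y : U ⊕ V → ℝ`. -/
noncomputable def adjAct {U V : Type*} [Fintype U] [Fintype V] [DecidableEq U] [DecidableEq V]
    (E : Finset (U × V)) (d : ℕ) (y : U ⊕ V → ℝ) : U ⊕ V → ℝ
  | Sum.inl u => (∑ e ∈ E.filter fun e => e.1 = u, y (Sum.inr e.2)) / d
  | Sum.inr v => (∑ e ∈ E.filter fun e => e.2 = v, y (Sum.inl e.1)) / d

/-- A bipartite `(n, d, λ)`-expander: a connected `d`-regular bipartite graph on parts `U, V`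
of size `n` each, whose normalized adjacency matrix `M` satisfies `‖M y‖ ≤ λ‖y‖` for every
`y` orthogonal to the all-ones vector `y⁺` and to `y⁻` (which is `+1` on `U`, `−1` on `V`). -/
structure BipartiteExpander (U V : Type*) [Fintype U] [Fintype V] [DecidableEq U] [DecidableEq V]
    (n d : ℕ) (lam : ℝ) where
  E : Finset (U × V)
  card_U : Fintype.card U = n
  card_V : Fintype.card V = n
  degU : ∀ u : U, (E.filter fun e => e.1 = u).card = d
  degV : ∀ v : V, (E.filter fun e => e.2 = v).card = d
  connected : ∀ a b : U ⊕ V, Relation.ReflTransGen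
    (fun a b => ∃ e ∈ E, (a = Sum.inl e.1 ∧ b = Sum.inr e.2) ∨
      (a = Sum.inr e.2 ∧ b = Sum.inl e.1)) a b
  spectral : ∀ y : U ⊕ V → ℝ,
    (∑ s : U ⊕ V, y s * 1) = 0 →
    (∑ s : U ⊕ V, y s * Sum.elim (fun _ => (1 : ℝ)) (fun _ => (-1 : ℝ)) s) = 0 →
    Real.sqrt (∑ s : U ⊕ V, adjAct E d y s ^ 2) ≤ lam * Real.sqrt (∑ s : U ⊕ V, y s ^ 2)

/-!
Rotating the vectors on `V` by a unit complex number turns the edge sum into its modulus, so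
it suffices to bound the real part, which is an edge sum of real inner products. Expanding
in an orthonormal basis splits it into scalar edge sums `∑_{(u,v)} y_u y_v = (d/2)⟨y, M y⟩`,
one per coordinate `y`. Each coordinate vector sums to zero on both sides, i.e. is orthogonal
to `y⁺` and `y⁻`, so Cauchy–Schwarz and the spectral bound give `⟨y, M y⟩ ≤ λ‖y‖²`; summing
the coordinates back up gives `λ ∑_s ‖x^s‖²`.
-/

open Finset

section Bipartite

variable {U V : Type*} [Fintype U] [Fintype V] [DecidableEq U] [DecidableEq V]

theorem sum_mul_adjAct (E : Finset (U × V)) (d : ℕ) (y : U ⊕ V → ℝ) :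
    ∑ s, y s * adjAct E d y s = 2 * (∑ e ∈ E, y (.inl e.1) * y (.inr e.2)) / d := by
  have hinl : ∑ u : U, y (.inl u) * adjAct E d y (.inl u) =
      (∑ e ∈ E, y (.inl e.1) * y (.inr e.2)) / d := by
    simp only [adjAct, mul_div_assoc', mul_sum, ← sum_div]
    rw [← sum_fiberwise E Prod.fst]
    refine congrArg (· / _) (sum_congr rfl fun u _ => sum_congr rfl fun e he => ?_)
    rw [(mem_filter.1 he).2]
  have hinr : ∑ v : V, y (.inr v) * adjAct E d y (.inr v) =
      (∑ e ∈ E, y (.inl e.1) * y (.inr e.2)) / d := by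
    simp only [adjAct, mul_div_assoc', mul_sum, ← sum_div]
    rw [← sum_fiberwise E Prod.snd]
    refine congrArg (· / _) (sum_congr rfl fun v _ => sum_congr rfl fun e he => ?_)
    rw [(mem_filter.1 he).2, mul_comm]
  rw [Fintype.sum_sum_type, hinl, hinr]
  ring

namespace BipartiteExpander

variable {n d : ℕ} {lam : ℝ} (Γ : BipartiteExpander U V n d lam)

theorem sum_mul_adjAct_le (y : U ⊕ V → ℝ) (hU : ∑ u : U, y (.inl u) = 0)
    (hV : ∑ v : V, y (.inr v) = 0) :
    ∑ s, y s * adjAct Γ.E d y s ≤ lam * ∑ s, y s ^ 2 := by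
  have hspec := Γ.spectral y (by simp [Fintype.sum_sum_type, hU, hV])
    (by simp [Fintype.sum_sum_type, hU, hV])
  calc ∑ s, y s * adjAct Γ.E d y s
      ≤ √(∑ s, y s ^ 2) * √(∑ s, adjAct Γ.E d y s ^ 2) :=
          Real.sum_mul_le_sqrt_mul_sqrt _ _ _
    _ ≤ √(∑ s, y s ^ 2) * (lam * √(∑ s, y s ^ 2)) := by gcongr
    _ = lam * ∑ s, y s ^ 2 := by
      rw [mul_left_comm, Real.mul_self_sqrt (by positivity)]

/-- Keeping the division by `d` (as in `adjAct`) makes the degenerate case `d = 0` harmless. -/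
theorem two_mul_sum_edge_div_le (y : U ⊕ V → ℝ) (hU : ∑ u : U, y (.inl u) = 0)
    (hV : ∑ v : V, y (.inr v) = 0) :
    2 * (∑ e ∈ Γ.E, y (.inl e.1) * y (.inr e.2)) / d ≤ lam * ∑ s, y s ^ 2 :=
  sum_mul_adjAct Γ.E d y ▸ Γ.sum_mul_adjAct_le y hU hV

open scoped RealInnerProductSpace in
theorem two_mul_sum_edge_inner_div_le {F : Type*} [NormedAddCommGroup F]
    [InnerProductSpace ℝ F] [FiniteDimensional ℝ F] (x : U ⊕ V → F)
    (hU : ∑ u : U, x (.inl u) = 0) (hV : ∑ v : V, x (.inr v) = 0) :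
    2 * (∑ e ∈ Γ.E, ⟪x (.inl e.1), x (.inr e.2)⟫) / d ≤ lam * ∑ s, ‖x s‖ ^ 2 := by
  let b := stdOrthonormalBasis ℝ F
  let w : _ → U ⊕ V → ℝ := fun i s => ⟪b i, x s⟫
  have hw : ∀ i, 2 * (∑ e ∈ Γ.E, w i (.inl e.1) * w i (.inr e.2)) / d ≤ lam * ∑ s, w i s ^ 2 :=
    fun i => Γ.two_mul_sum_edge_div_le (w i) (by simp [w, ← inner_sum, hU])
      (by simp [w, ← inner_sum, hV])
  have parseval : ∀ s t, ⟪x s, x t⟫ = ∑ i, w i s * w i t := fun s t => by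
    rw [← b.sum_inner_mul_inner]
    simp only [w, real_inner_comm (b _) (x s)]
  calc 2 * (∑ e ∈ Γ.E, ⟪x (.inl e.1), x (.inr e.2)⟫) / d
      = ∑ i, 2 * (∑ e ∈ Γ.E, w i (.inl e.1) * w i (.inr e.2)) / d := by
        simp only [parseval]
        rw [sum_comm, mul_sum, sum_div]
    _ ≤ ∑ i, lam * ∑ s, w i s ^ 2 := sum_le_sum fun i _ => hw i
    _ = lam * ∑ s, ‖x s‖ ^ 2 := by
        rw [← mul_sum, sum_comm]
        simp only [w, b.sum_sq_inner_right]

theorem two_mul_norm_sum_edge_inner_div_le {G : Type*} [NormedAddCommGroup G]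
    [InnerProductSpace ℂ G] [FiniteDimensional ℂ G] (x : U ⊕ V → G)
    (hU : ∑ u : U, x (.inl u) = 0) (hV : ∑ v : V, x (.inr v) = 0) :
    2 * ‖∑ e ∈ Γ.E, inner ℂ (x (.inl e.1)) (x (.inr e.2))‖ / d ≤ lam * ∑ s, ‖x s‖ ^ 2 := by
  -- the real structure has `⟪x, y⟫_ℝ = re ⟪x, y⟫_ℂ` definitionally
  let : InnerProductSpace ℝ G := InnerProductSpace.complexToReal
  obtain ⟨c, hc, hcS⟩ := RCLike.exists_norm_eq_mul_self
    (∑ e ∈ Γ.E, inner ℂ (x (.inl e.1)) (x (.inr e.2)))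
  let x' : U ⊕ V → G := Sum.elim (fun u => x (.inl u)) (fun v => c • x (.inr v))
  have key := Γ.two_mul_sum_edge_inner_div_le x' hU (by simp [x', ← smul_sum, hV])
  have hnorm : ∀ s, ‖x' s‖ = ‖x s‖ := by
    rintro (u | v)
    · rfl
    · simp [x', norm_smul, hc]
  have hre : ‖∑ e ∈ Γ.E, inner ℂ (x (.inl e.1)) (x (.inr e.2))‖ =
      ∑ e ∈ Γ.E, inner ℝ (x' (.inl e.1)) (x' (.inr e.2)) := by
    rw [← RCLike.ofReal_re (K := ℂ) ‖_‖, hcS, mul_sum, map_sum]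
    refine sum_congr rfl fun e _ => ?_
    rw [← inner_smul_right]
    rfl
  simpa only [hre, hnorm] using key

end BipartiteExpander

end Bipartite

/-- Lemma 10 of the paper: if vectors `x^s` summing to zero on each side
are placed on the vertices of a bipartite `(n, d, λ)`-expander, then
`|(1/(nd)) ∑_{(u,v)∈E} ⟨x^u, x^v⟩| ≤ λ · (1/(2n)) ∑_s ‖x^s‖²`. -/
theorem expander_vector_mixing {U V : Type*} [Fintype U] [Fintype V]
    [DecidableEq U] [DecidableEq V] {n d : ℕ} {lam : ℝ}
    (Γ : BipartiteExpander U V n d lam) {m : ℕ}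
    (x : U ⊕ V → EuclideanSpace ℂ (Fin m))
    (hU : ∑ u : U, x (Sum.inl u) = 0) (hV : ∑ v : V, x (Sum.inr v) = 0) :
    ‖((n * d : ℕ) : ℂ)⁻¹ *
        ∑ e ∈ Γ.E, (inner ℂ (x (Sum.inl e.1)) (x (Sum.inr e.2)) : ℂ)‖ ≤
      lam * (((2 * n : ℕ) : ℝ)⁻¹ * ∑ s : U ⊕ V, ‖x s‖ ^ 2) := by
  set S := ∑ e ∈ Γ.E, inner ℂ (x (.inl e.1)) (x (.inr e.2))
  rw [norm_mul, norm_inv, RCLike.norm_natCast]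
  calc ((n * d : ℕ) : ℝ)⁻¹ * ‖S‖ = ((2 * n : ℕ) : ℝ)⁻¹ * (2 * ‖S‖ / d) := by
        push_cast
        ring
    _ ≤ ((2 * n : ℕ) : ℝ)⁻¹ * (lam * ∑ s, ‖x s‖ ^ 2) := by
        gcongr
        exact Γ.two_mul_norm_sum_edge_inner_div_le x hU hV
    _ = lam * (((2 * n : ℕ) : ℝ)⁻¹ * ∑ s, ‖x s‖ ^ 2) := mul_left_comm _ _ _
end

section
/- Let X_0, X_1, …, X_T be real-valued random variables adapted to a filtration F_0 ⊆ F_1 ⊆ ⋯ ⊆ F_T, and let α_1, …, α_T and ε_1, …, ε_T be reals with 0 ≤ ε_i ≤ α_i ≤ 1 for each i. Suppose that almost surely X_{i−1} − α_i ≤ X_i ≤ X_{i−1} for each 1 ≤ i ≤ T, and that E[X_i | F_{i−1}] ≤ X_{i−1} − ε_i almost surely for each 1 ≤ i ≤ T. Then for every λ ≥ 0, Pr[ X_T − X_0 ≥ −Σ_{i=1}^T ε_i + λ ] ≤ exp( −λ² / (2 Σ_{i=1}^T α_i) ). -/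
/-!
Each increment `D = X i - X (i - 1)` lies in `[-α i, 0]` with `α i ≤ 1`, so for `t ≥ 0` the
bound `exp x ≤ 1 + x + x²/2` (valid for `x ≤ 0`) gives `exp (t D) ≤ 1 + t D + t² α i / 2`.
Taking conditional expectations and using the drift, `E[exp (t D) | ℱ (i - 1)] ≤
exp (t² α i / 2 - t ε i)`. Pulling out the `ℱ (i - 1)`-measurable factor step by step bounds the
moment generating function of `X T - X 0` by `exp (t² ∑ α / 2 - t ∑ ε)`, and the Chernoff bound
at `t = λ / ∑ α` concludes.
-/

open Finset MeasureTheory ProbabilityTheory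

namespace Real

theorem exp_le_one_add_add_sq_div_two {x : ℝ} (hx : x ≤ 0) : exp x ≤ 1 + x + x ^ 2 / 2 := by
  have hcubic : 1 - x + x ^ 2 / 2 - x ^ 3 / 6 ≤ exp (-x) := by
    have := sum_le_exp_of_nonneg (neg_nonneg.2 hx) 4
    norm_num [Finset.sum_range_succ, Nat.factorial] at this
    linarith
  -- the product of the two polynomials is `1 - x³/6 + x⁴/12 - x⁵/12`
  have hprod : 1 ≤ (1 + x + x ^ 2 / 2) * (1 - x + x ^ 2 / 2 - x ^ 3 / 6) := by
    nlinarith [pow_two_nonneg x, mul_nonneg (pow_two_nonneg x) (neg_nonneg.2 hx),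
      mul_nonneg (pow_two_nonneg (x ^ 2)) (neg_nonneg.2 hx)]
  have hq : 0 ≤ 1 + x + x ^ 2 / 2 := by nlinarith [sq_nonneg (x + 1)]
  calc exp x ≤ exp x * ((1 + x + x ^ 2 / 2) * exp (-x)) := by
        refine le_mul_of_one_le_right (exp_pos x).le (hprod.trans ?_)
        exact mul_le_mul_of_nonneg_left hcubic hq
    _ = 1 + x + x ^ 2 / 2 := by
        rw [mul_left_comm, ← exp_add, add_neg_cancel, exp_zero, mul_one]

theorem exp_mul_le_of_neg_le_of_nonpos {t a d : ℝ} (ht : 0 ≤ t) (ha : a ≤ 1) (hda : -a ≤ d)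
    (hd : d ≤ 0) : exp (t * d) ≤ 1 + t * d + t ^ 2 * a / 2 := by
  have hsq : d ^ 2 ≤ a := by nlinarith
  calc exp (t * d) ≤ 1 + t * d + (t * d) ^ 2 / 2 :=
        exp_le_one_add_add_sq_div_two (mul_nonpos_of_nonneg_of_nonpos ht hd)
    _ ≤ 1 + t * d + t ^ 2 * a / 2 := by
        rw [mul_pow]; gcongr

end Real

open Real

section

variable {Ω : Type*} {mΩ : MeasurableSpace Ω} {μ : Measure Ω}

theorem integrable_exp_mul_sub_of_ae_le [IsFiniteMeasure μ] {f g : Ω → ℝ}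
    (hf : AEStronglyMeasurable f μ) (hg : AEStronglyMeasurable g μ) {t : ℝ} (ht : 0 ≤ t)
    (hfg : f ≤ᵐ[μ] g) : Integrable (fun ω => exp (t * (f ω - g ω))) μ := by
  refine .of_bound (continuous_exp.comp_aestronglyMeasurable ((hf.sub hg).const_mul t)) 1 ?_
  filter_upwards [hfg] with ω hω
  rw [norm_of_nonneg (exp_pos _).le, exp_le_one_iff]
  exact mul_nonpos_of_nonneg_of_nonpos ht (sub_nonpos.2 hω)

theorem integral_mul_le_of_condExp_le {m : MeasurableSpace Ω} (hm : m ≤ mΩ)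
    [SigmaFinite (μ.trim hm)] {f g : Ω → ℝ} {c : ℝ} (hf : StronglyMeasurable[m] f)
    (hf0 : 0 ≤ᵐ[μ] f) (hf_int : Integrable f μ) (hg : Integrable g μ)
    (hfg : Integrable (f * g) μ) (hgc : μ[g | m] ≤ᵐ[μ] fun _ => c) :
    ∫ ω, (f * g) ω ∂μ ≤ c * ∫ ω, f ω ∂μ := by
  have hpull := condExp_mul_of_stronglyMeasurable_left hf hfg hg
  calc ∫ ω, (f * g) ω ∂μ = ∫ ω, (f * μ[g | m]) ω ∂μ := by
        rw [← integral_condExp hm]; exact integral_congr_ae hpull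
    _ ≤ ∫ ω, f ω * c ∂μ := by
        refine integral_mono_ae (integrable_condExp.congr hpull) (hf_int.mul_const c) ?_
        filter_upwards [hf0, hgc] with ω hω0 hωc
        exact mul_le_mul_of_nonneg_left hωc hω0
    _ = c * ∫ ω, f ω ∂μ := by rw [integral_mul_const, mul_comm]

theorem condExp_exp_mul_sub_le [IsFiniteMeasure μ] {m : MeasurableSpace Ω} (hm : m ≤ mΩ)
    {Y Z : Ω → ℝ} (hY : Integrable Y μ) (hZm : StronglyMeasurable[m] Z) (hZ : Integrable Z μ)
    {a e t : ℝ} (ht : 0 ≤ t) (ha : a ≤ 1) (hbdd : ∀ᵐ ω ∂μ, Z ω - a ≤ Y ω ∧ Y ω ≤ Z ω)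
    (hdrift : μ[Y | m] ≤ᵐ[μ] fun ω => Z ω - e) :
    μ[fun ω => exp (t * (Y ω - Z ω)) | m] ≤ᵐ[μ] fun _ => exp (t ^ 2 * a / 2 - t * e) := by
  set c := 1 + t ^ 2 * a / 2 with hc
  have hexp_int : Integrable (fun ω => exp (t * (Y ω - Z ω))) μ :=
    integrable_exp_mul_sub_of_ae_le hY.1 hZ.1 ht (hbdd.mono fun _ h => h.2)
  have hW : StronglyMeasurable[m] fun ω => c - t * Z ω :=
    stronglyMeasurable_const.sub (hZm.const_mul t)
  have haffine_eq : (fun ω => c + t * (Y ω - Z ω)) = t • Y + fun ω => c - t * Z ω := by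
    ext ω; simp only [Pi.add_apply, Pi.smul_apply, smul_eq_mul]; ring
  have hW_int : Integrable (fun ω => c - t * Z ω) μ := (integrable_const c).sub (hZ.const_mul t)
  have hcondExp_affine : μ[fun ω => c + t * (Y ω - Z ω) | m] =ᵐ[μ]
      fun ω => t * μ[Y | m] ω + (c - t * Z ω) := by
    rw [haffine_eq]
    filter_upwards [condExp_add (hY.smul t) hW_int m, condExp_smul t Y m] with ω hadd hsmul
    rw [hadd, Pi.add_apply, hsmul, condExp_of_stronglyMeasurable hm hW hW_int]
    rfl
  have hpointwise : (fun ω => exp (t * (Y ω - Z ω))) ≤ᵐ[μ] fun ω => c + t * (Y ω - Z ω) := by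
    filter_upwards [hbdd] with ω hω
    have := exp_mul_le_of_neg_le_of_nonpos ht ha (d := Y ω - Z ω) (by linarith [hω.1])
      (by linarith [hω.2])
    linarith
  filter_upwards [condExp_mono (m := m) (g := fun ω => c + t * (Y ω - Z ω)) hexp_int
    ((integrable_const c).add ((hY.sub hZ).const_mul t)) hpointwise, hcondExp_affine, hdrift]
    with ω hmono haffine hω
  calc μ[fun ω => exp (t * (Y ω - Z ω)) | m] ω ≤ c - t * e := by
        rw [haffine] at hmono
        linarith [mul_le_mul_of_nonneg_left hω ht]
    _ ≤ exp (t ^ 2 * a / 2 - t * e) := by linarith [hc, add_one_le_exp (t ^ 2 * a / 2 - t * e)]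

theorem ae_le_of_forall_ae_le_pred {β : Type*} [Preorder β] {X : ℕ → Ω → β} {n : ℕ}
    (hdec : ∀ i ∈ Icc 1 n, X i ≤ᵐ[μ] X (i - 1)) : X n ≤ᵐ[μ] X 0 := by
  induction n with
  | zero => exact .rfl
  | succ k ih =>
    exact (hdec (k + 1) (by simp)).trans
      (ih fun i hi => hdec i (Icc_subset_Icc_right k.le_succ hi))

theorem integral_exp_mul_sub_le_exp_sum [IsProbabilityMeasure μ] {ℱ : Filtration ℕ mΩ}
    {X : ℕ → Ω → ℝ} (hadp : Adapted ℱ X) {t : ℝ} (ht : 0 ≤ t) (c : ℕ → ℝ) {n : ℕ}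
    (hdec : ∀ i ∈ Icc 1 n, X i ≤ᵐ[μ] X (i - 1))
    (hstep : ∀ i ∈ Icc 1 n,
      μ[fun ω => exp (t * (X i ω - X (i - 1) ω)) | ℱ (i - 1)] ≤ᵐ[μ] fun _ => exp (c i)) :
    ∫ ω, exp (t * (X n ω - X 0 ω)) ∂μ ≤ exp (∑ i ∈ Icc 1 n, c i) := by
  have hexp_int {j k : ℕ} (hjk : X j ≤ᵐ[μ] X k) :
      Integrable (fun ω => exp (t * (X j ω - X k ω))) μ :=
    integrable_exp_mul_sub_of_ae_le ((hadp j).mono (ℱ.le j) le_rfl).aestronglyMeasurable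
      ((hadp k).mono (ℱ.le k) le_rfl).aestronglyMeasurable ht hjk
  induction n with
  | zero => simp
  | succ k ih =>
    have hdec_k : ∀ i ∈ Icc 1 k, X i ≤ᵐ[μ] X (i - 1) :=
      fun i hi => hdec i (Icc_subset_Icc_right k.le_succ hi)
    set f := fun ω => exp (t * (X k ω - X 0 ω))
    set g := fun ω => exp (t * (X (k + 1) ω - X k ω))
    have hfg : (fun ω => exp (t * (X (k + 1) ω - X 0 ω))) = f * g := by
      ext ω; simp only [f, g, Pi.mul_apply, ← exp_add]; ring_nf
    have hfm : StronglyMeasurable[ℱ k] f :=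
      (((hadp k).sub ((hadp 0).mono (ℱ.mono k.zero_le) le_rfl)).const_mul t).exp.stronglyMeasurable
    calc ∫ ω, exp (t * (X (k + 1) ω - X 0 ω)) ∂μ = ∫ ω, (f * g) ω ∂μ := by rw [hfg]
      _ ≤ exp (c (k + 1)) * ∫ ω, f ω ∂μ := by
        refine integral_mul_le_of_condExp_le (ℱ.le k) hfm (.of_forall fun ω => (exp_pos _).le)
          (hexp_int (ae_le_of_forall_ae_le_pred hdec_k)) (hexp_int (hdec (k + 1) (by simp))) ?_
          (by simpa using hstep (k + 1) (by simp))
        rw [← hfg]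
        exact hexp_int (ae_le_of_forall_ae_le_pred hdec)
      _ ≤ exp (c (k + 1)) * exp (∑ i ∈ Icc 1 k, c i) := by
        gcongr
        exact ih hdec_k fun i hi => hstep i (Icc_subset_Icc_right k.le_succ hi)
      _ = exp (∑ i ∈ Icc 1 (k + 1), c i) := by
        rw [← exp_add, sum_Icc_succ_top (by omega), add_comm]

end

theorem azuma_with_drift_general {Ω : Type*} {mΩ : MeasurableSpace Ω} {μ : Measure Ω}
    [IsProbabilityMeasure μ] (ℱ : Filtration ℕ mΩ) (X : ℕ → Ω → ℝ) (T : ℕ)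
    (hadp : Adapted ℱ X) (hint : ∀ i, Integrable (X i) μ) (α ε : ℕ → ℝ)
    (hα1 : ∀ i ∈ Finset.Icc 1 T, α i ≤ 1)
    (hbdd : ∀ i ∈ Finset.Icc 1 T, ∀ᵐ ω ∂μ,
      X (i - 1) ω - α i ≤ X i ω ∧ X i ω ≤ X (i - 1) ω)
    (hcond : ∀ i ∈ Finset.Icc 1 T,
      μ[X i | ℱ (i - 1)] ≤ᵐ[μ] fun ω => X (i - 1) ω - ε i)
    (lam : ℝ) (hlam : 0 ≤ lam) :
    μ {ω | -(∑ i ∈ Finset.Icc 1 T, ε i) + lam ≤ X T ω - X 0 ω} ≤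
      ENNReal.ofReal (Real.exp (-lam ^ 2 / (2 * ∑ i ∈ Finset.Icc 1 T, α i))) := by
  set S := ∑ i ∈ Icc 1 T, α i with hS_def
  rcases le_or_gt S 0 with hS | hS
  · refine prob_le_one.trans (ENNReal.one_le_ofReal.2 (one_le_exp ?_))
    exact div_nonneg_of_nonpos (neg_nonpos.2 (sq_nonneg lam)) (by linarith)
  set t := lam / S
  have ht : 0 ≤ t := div_nonneg hlam hS.le
  have hdec : ∀ i ∈ Icc 1 T, X i ≤ᵐ[μ] X (i - 1) := fun i hi => (hbdd i hi).mono fun _ h => h.2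
  have hmgf := integral_exp_mul_sub_le_exp_sum hadp ht (fun i => t ^ 2 * α i / 2 - t * ε i) hdec
    fun i hi => condExp_exp_mul_sub_le (ℱ.le _) (hint i) (hadp _).stronglyMeasurable (hint _) ht
      (hα1 i hi) (hbdd i hi) (hcond i hi)
  have hchernoff := measure_ge_le_exp_mul_mgf (-(∑ i ∈ Icc 1 T, ε i) + lam) ht
    (integrable_exp_mul_sub_of_ae_le (hint T).1 (hint 0).1 ht (ae_le_of_forall_ae_le_pred hdec))
  have hexponent : -t * (-(∑ i ∈ Icc 1 T, ε i) + lam) + ∑ i ∈ Icc 1 T, (t ^ 2 * α i / 2 - t * ε i)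
      = -lam ^ 2 / (2 * S) := by
    rw [sum_sub_distrib, ← sum_div, ← mul_sum, ← mul_sum, ← hS_def]
    simp only [t]
    field_simp
    ring
  rw [← ofReal_measureReal]
  refine ENNReal.ofReal_le_ofReal (hchernoff.trans ?_)
  rw [← hexponent, exp_add]
  exact mul_le_mul_of_nonneg_left hmgf (exp_pos _).le

/-- Corollary 14 of the paper, a drifted one-sided Azuma inequality:
for an adapted sequence with nonpositive increments bounded below by `−αᵢ` and conditional
drift at most `−εᵢ`, `Pr[X_T − X_0 ≥ −∑εᵢ + λ] ≤ exp(−λ²/(2∑αᵢ))`. -/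
theorem azuma_with_drift {Ω : Type*} {mΩ : MeasurableSpace Ω} {μ : Measure Ω}
    [IsProbabilityMeasure μ] (ℱ : Filtration ℕ mΩ) (X : ℕ → Ω → ℝ) (T : ℕ)
    (hadp : Adapted ℱ X) (hint : ∀ i, Integrable (X i) μ) (α ε : ℕ → ℝ)
    (hε0 : ∀ i ∈ Finset.Icc 1 T, 0 ≤ ε i)
    (hεα : ∀ i ∈ Finset.Icc 1 T, ε i ≤ α i)
    (hα1 : ∀ i ∈ Finset.Icc 1 T, α i ≤ 1)
    (hαpos : 0 < ∑ i ∈ Finset.Icc 1 T, α i)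
    (hbdd : ∀ i ∈ Finset.Icc 1 T, ∀ᵐ ω ∂μ,
      X (i - 1) ω - α i ≤ X i ω ∧ X i ω ≤ X (i - 1) ω)
    (hcond : ∀ i ∈ Finset.Icc 1 T,
      μ[X i | ℱ (i - 1)] ≤ᵐ[μ] fun ω => X (i - 1) ω - ε i)
    (lam : ℝ) (hlam : 0 ≤ lam) :
    μ {ω | -(∑ i ∈ Finset.Icc 1 T, ε i) + lam ≤ X T ω - X 0 ω} ≤
      ENNReal.ofReal (Real.exp (-lam ^ 2 / (2 * ∑ i ∈ Finset.Icc 1 T, α i))) :=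
  azuma_with_drift_general ℱ X T hadp hint α ε hα1 hbdd hcond lam hlam
end

section
/- Let P_1, …, P_k be independent random variables taking values in the cone of positive semidefinite operators on an n-dimensional complex Hilbert space H, such that almost surely ‖P_i‖ ≤ 1 for each i, and such that ‖E[P_i]‖ ≤ 1 − δ for each i, where 0 ≤ δ ≤ 1 and ‖·‖ denotes the operator norm. Then for every unit vector v ∈ H and every Δ ≥ 0, Pr[ ‖P_k P_{k−1} ⋯ P_1 v‖ ≥ exp(−kδ/2 + Δ) ] ≤ exp( −Δ² / (2k ln 2) ). -/
open scoped BigOperators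
open MeasureTheory ProbabilityTheory
open scoped ComplexOrder

/-- Matrices carry the product measurable structure (entrywise). -/
noncomputable instance matrixMeasurableSpace {m n : Type*} : MeasurableSpace (Matrix m n ℂ) :=
  inferInstanceAs (MeasurableSpace (m → n → ℂ))

/-- The entrywise expectation of a matrix-valued random variable. -/
noncomputable def matExp {Ω : Type*} [MeasurableSpace Ω] (μ : Measure Ω) {m n : Type*}
    (P : Ω → Matrix m n ℂ) : Matrix m n ℂ :=
  Matrix.of fun a b => ∫ ω, P ω a b ∂μ

/-- The reversed product `P_{k-1} P_{k-2} ⋯ P_0` of a `Fin k`-indexed family of matrices. -/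
noncomputable def revProd {k n : ℕ} (P : Fin k → Matrix (Fin n) (Fin n) ℂ) : Matrix (Fin n) (Fin n) ℂ :=
  (List.ofFn fun j : Fin k => P (Fin.rev j)).prod

/-!
For a positive operator `T` with `‖T‖ ≤ 1` we have `T² ≤ T`, i.e. `‖T w‖² ≤ re ⟪w, T w⟫`.
With `T = P_j` and `w = P_{j-1} ⋯ P_1 v`, which is independent of `P_j`, taking expectations
gives `E ‖P_j w‖² ≤ ‖E P_j‖ · E ‖w‖²`, hence `E ‖P_k ⋯ P_1 v‖² ≤ ∏ ‖E P_i‖ ≤ exp(-kδ)`.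
Markov's inequality for the square bounds the probability by `exp(-2Δ)`, which is below the claimed
bound when `Δ ≤ kδ/2`; for larger `Δ` the threshold exceeds `1 ≥ ‖P_k ⋯ P_1 v‖`.
-/

open scoped InnerProductSpace

theorem CStarAlgebra.mul_self_le_norm_smul {A : Type*} [CStarAlgebra A] [PartialOrder A]
    [StarOrderedRing A] {a : A} (ha : 0 ≤ a) : a * a ≤ ‖a‖ • a := by
  set s := CFC.sqrt a
  have hs : star s = s := (CFC.sqrt_nonneg a).isSelfAdjoint.star_eq
  have hss : s * s = a := CFC.sqrt_mul_sqrt_self a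
  calc a * a = star s * a * s := by rw [hs, ← hss]; simp only [mul_assoc]
    _ ≤ ‖a‖ • (star s * s) := star_left_conjugate_le_norm_smul ha.isSelfAdjoint
    _ = ‖a‖ • a := by rw [hs, hss]

theorem ContinuousLinearMap.IsPositive.norm_apply_sq_le {E : Type*} [NormedAddCommGroup E]
    [InnerProductSpace ℂ E] [CompleteSpace E] {T : E →L[ℂ] E} (hT : T.IsPositive) (x : E) :
    ‖T x‖ ^ 2 ≤ ‖T‖ * RCLike.re ⟪x, T x⟫_ℂ := by
  have h := CStarAlgebra.mul_self_le_norm_smul ((nonneg_iff_isPositive T).2 hT)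
  have hpos := (le_def _ _).1 h |>.re_inner_nonneg_left x
  rwa [sub_apply, inner_sub_left, map_sub, smul_apply, mul_apply_eq_comp,
    RCLike.real_smul_eq_coe_smul (K := ℂ), inner_smul_real_left, RCLike.smul_re,
    hT.inner_left_eq_inner_right (T x), inner_self_eq_norm_sq, hT.inner_left_eq_inner_right,
    sub_nonneg] at hpos

section MatOpNorm

variable {m : Type*} [Fintype m] [DecidableEq m]

theorem Matrix.PosSemidef.isPositive_toEuclideanCLM {M : Matrix m m ℂ} (hM : M.PosSemidef) :
    (Matrix.toEuclideanCLM (𝕜 := ℂ) M).IsPositive := by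
  rw [← ContinuousLinearMap.isPositive_toLinearMap_iff,
    Matrix.coe_toEuclideanCLM_eq_toEuclideanLin]
  exact Matrix.isPositive_toEuclideanLin_iff.2 hM

theorem norm_toEuclideanCLM_apply_le_norm {M : Matrix m m ℂ} (hM : matOpNorm M ≤ 1)
    (x : EuclideanSpace ℂ m) : ‖Matrix.toEuclideanCLM (𝕜 := ℂ) M x‖ ≤ ‖x‖ :=
  ((Matrix.toEuclideanCLM (𝕜 := ℂ) M).le_opNorm x).trans <|
    mul_le_of_le_one_left (norm_nonneg x) hM

theorem norm_entry_le_matOpNorm (M : Matrix m m ℂ) (a b : m) : ‖M a b‖ ≤ matOpNorm M :=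
  calc ‖M a b‖ = ‖Matrix.toEuclideanCLM (𝕜 := ℂ) M (EuclideanSpace.single b 1) a‖ := by
        simp [EuclideanSpace.single, Matrix.mulVec_single]
    _ ≤ ‖Matrix.toEuclideanCLM (𝕜 := ℂ) M (EuclideanSpace.single b 1)‖ := PiLp.norm_apply_le _ _
    _ ≤ matOpNorm M * ‖EuclideanSpace.single b (1 : ℂ)‖ :=
        (Matrix.toEuclideanCLM (𝕜 := ℂ) M).le_opNorm _
    _ = matOpNorm M := by simp

theorem matOpNorm_mul_le (A B : Matrix m m ℂ) :
    matOpNorm (A * B) ≤ matOpNorm A * matOpNorm B := by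
  simp only [matOpNorm, map_mul]
  exact norm_mul_le _ _

theorem inner_toEuclideanCLM_self_eq_sum (M : Matrix m m ℂ) (x : EuclideanSpace ℂ m) :
    ⟪x, Matrix.toEuclideanCLM (𝕜 := ℂ) M x⟫_ℂ = ∑ a, ∑ b, star (x a) * x b * M a b := by
  simp only [PiLp.inner_apply, RCLike.inner_apply, Matrix.ofLp_toEuclideanCLM, Matrix.mulVec,
    dotProduct, Finset.sum_mul, starRingEnd_apply]
  exact Finset.sum_congr rfl fun a _ => Finset.sum_congr rfl fun b _ => by ring

end MatOpNorm

theorem revProd_succ {k n : ℕ} (M : Fin (k + 1) → Matrix (Fin n) (Fin n) ℂ) :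
    revProd M = M (Fin.last k) * revProd fun i => M i.castSucc := by
  simp [revProd, List.ofFn_succ, Fin.rev_succ]

theorem matOpNorm_revProd_le {n k : ℕ} (M : Fin k → Matrix (Fin n) (Fin n) ℂ) :
    matOpNorm (revProd M) ≤ ∏ i, matOpNorm (M i) := by
  induction k with
  | zero =>
    simp only [revProd, List.ofFn_zero, List.prod_nil, matOpNorm, map_one, Finset.univ_eq_empty,
      Finset.prod_empty]
    exact ContinuousLinearMap.norm_id_le
  | succ k ih =>
    rw [revProd_succ, Fin.prod_univ_castSucc, mul_comm]
    exact (matOpNorm_mul_le _ _).trans <| mul_le_mul_of_nonneg_left (ih _) (norm_nonneg _)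

section Measurability

variable {Ω : Type*} [MeasurableSpace Ω]

theorem Measurable.matrix_entry {m n : Type*} {A : Ω → Matrix m n ℂ} (hA : Measurable A)
    (a : m) (b : n) : Measurable fun ω => A ω a b :=
  (measurable_pi_apply b).comp ((measurable_pi_apply a).comp hA)

theorem Measurable.matrix_mul {l m n : Type*} [Fintype m] {A : Ω → Matrix l m ℂ}
    {B : Ω → Matrix m n ℂ} (hA : Measurable A) (hB : Measurable B) :
    Measurable fun ω => A ω * B ω :=
  measurable_pi_lambda _ fun a => measurable_pi_lambda _ fun b =>
    Finset.measurable_sum _ fun c _ => (hA.matrix_entry a c).mul (hB.matrix_entry c b)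

theorem Measurable.toEuclideanCLM_apply {m : Type*} [Fintype m] [DecidableEq m]
    {A : Ω → Matrix m m ℂ} {w : Ω → EuclideanSpace ℂ m} (hA : Measurable A)
    (hw : Measurable w) : Measurable fun ω => Matrix.toEuclideanCLM (𝕜 := ℂ) (A ω) (w ω) :=
  (PiLp.continuous_toLp 2 _).measurable.comp <| measurable_pi_lambda _ fun a =>
    Finset.measurable_sum _ fun b _ =>
      (hA.matrix_entry a b).mul ((PiLp.continuous_apply 2 _ b).measurable.comp hw)

theorem measurable_revProd {n k : ℕ} {M : Fin k → Ω → Matrix (Fin n) (Fin n) ℂ}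
    (hM : ∀ i, Measurable (M i)) : Measurable fun ω => revProd fun i => M i ω := by
  induction k with
  | zero => simp only [revProd, List.ofFn_zero, List.prod_nil]; exact measurable_const
  | succ k ih =>
    simp only [revProd_succ]
    exact (hM _).matrix_mul (ih fun i => hM i.castSucc)

theorem ProbabilityTheory.iIndepFun.indepFun_init_last {μ : Measure Ω} {k : ℕ} {β : Type*}
    [MeasurableSpace β] {f : Fin (k + 1) → Ω → β} (h : iIndepFun f μ)
    (hf : ∀ i, Measurable (f i)) :
    IndepFun (fun ω (i : Fin k) => f i.castSucc ω) (f (Fin.last k)) μ := by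
  have hdisj : Disjoint (Finset.univ.map Fin.castSuccEmb) {Fin.last k} := by
    simp [Fin.castSucc_ne_last]
  refine (h.indepFun_finset _ _ hdisj hf).comp
    (φ := fun t (i : Fin k) => t ⟨i.castSucc, by simp⟩) (ψ := fun t => t ⟨Fin.last k, by simp⟩)
    ?_ ?_
  · exact measurable_pi_lambda _ fun i => measurable_pi_apply _
  · exact measurable_pi_apply _

end Measurability

section Expectation

variable {Ω : Type*} [MeasurableSpace Ω] {μ : Measure Ω} {m : Type*} [Fintype m] [DecidableEq m]

theorem integrable_inner_toEuclideanCLM_apply {A : Ω → Matrix m m ℂ}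
    {w : Ω → EuclideanSpace ℂ m} (hA : Measurable A) (hw : Measurable w)
    (hw2 : Integrable (fun ω => ‖w ω‖ ^ 2) μ) {c : ℝ} (hAc : ∀ᵐ ω ∂μ, matOpNorm (A ω) ≤ c) :
    Integrable (fun ω => ⟪w ω, Matrix.toEuclideanCLM (𝕜 := ℂ) (A ω) (w ω)⟫_ℂ) μ := by
  refine (hw2.const_mul c).mono' (hw.inner (hA.toEuclideanCLM_apply hw)).aestronglyMeasurable ?_
  filter_upwards [hAc] with ω hω
  calc ‖⟪w ω, Matrix.toEuclideanCLM (𝕜 := ℂ) (A ω) (w ω)⟫_ℂ‖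
      ≤ ‖w ω‖ * (matOpNorm (A ω) * ‖w ω‖) := (norm_inner_le_norm _ _).trans <| by
        gcongr; exact (Matrix.toEuclideanCLM (𝕜 := ℂ) (A ω)).le_opNorm _
    _ ≤ c * ‖w ω‖ ^ 2 := by nlinarith [norm_nonneg (w ω)]

theorem integral_inner_toEuclideanCLM_of_indepFun {w : Ω → EuclideanSpace ℂ m}
    {A : Ω → Matrix m m ℂ} (hwA : IndepFun w A μ) (hw : Measurable w)
    (hw2 : Integrable (fun ω => ‖w ω‖ ^ 2) μ) (hAi : ∀ a b, Integrable (fun ω => A ω a b) μ) :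
    ∫ ω, ⟪w ω, Matrix.toEuclideanCLM (𝕜 := ℂ) (A ω) (w ω)⟫_ℂ ∂μ =
      ∫ ω, ⟪w ω, Matrix.toEuclideanCLM (𝕜 := ℂ) (matExp μ A) (w ω)⟫_ℂ ∂μ := by
  have hc_meas (a b : m) : Measurable fun x : EuclideanSpace ℂ m => star (x a) * x b := by
    fun_prop
  have hc_int (a b : m) : Integrable (fun ω => star (w ω a) * w ω b) μ := by
    refine hw2.mono' ((hc_meas a b).comp hw).aestronglyMeasurable (ae_of_all _ fun ω => ?_)
    rw [norm_mul, norm_star, sq]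
    exact mul_le_mul (PiLp.norm_apply_le _ _) (PiLp.norm_apply_le _ _) (norm_nonneg _)
      (norm_nonneg _)
  have hindep (a b : m) : IndepFun (fun ω => star (w ω a) * w ω b) (fun ω => A ω a b) μ :=
    hwA.comp (hc_meas a b) (measurable_id.matrix_entry a b)
  have hswap (f : m → m → Ω → ℂ) (hf : ∀ a b, Integrable (f a b) μ) :
      ∫ ω, ∑ a, ∑ b, f a b ω ∂μ = ∑ a, ∑ b, ∫ ω, f a b ω ∂μ := by
    rw [integral_finsetSum _ fun a _ => integrable_finsetSum _ fun b _ => hf a b]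
    exact Finset.sum_congr rfl fun a _ => integral_finsetSum _ fun b _ => hf a b
  simp_rw [inner_toEuclideanCLM_self_eq_sum]
  rw [hswap (fun a b ω => star (w ω a) * w ω b * A ω a b)
      fun a b => (hindep a b).integrable_mul (hc_int a b) (hAi a b),
    hswap (fun a b ω => star (w ω a) * w ω b * matExp μ A a b)
      fun a b => (hc_int a b).mul_const _]
  refine Finset.sum_congr rfl fun a _ => Finset.sum_congr rfl fun b _ => ?_
  rw [(hindep a b).integral_fun_mul_eq_mul_integral (hc_int a b).1 (hAi a b).1,
    integral_mul_const]
  rfl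

theorem integral_norm_sq_toEuclideanCLM_apply_le_of_indepFun [IsFiniteMeasure μ]
    {w : Ω → EuclideanSpace ℂ m} {A : Ω → Matrix m m ℂ} (hwA : IndepFun w A μ)
    (hw : Measurable w) (hA : Measurable A) (hw2 : Integrable (fun ω => ‖w ω‖ ^ 2) μ)
    (hpsd : ∀ᵐ ω ∂μ, (A ω).PosSemidef) (hbd : ∀ᵐ ω ∂μ, matOpNorm (A ω) ≤ 1) :
    ∫ ω, ‖Matrix.toEuclideanCLM (𝕜 := ℂ) (A ω) (w ω)‖ ^ 2 ∂μ ≤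
      matOpNorm (matExp μ A) * ∫ ω, ‖w ω‖ ^ 2 ∂μ := by
  set C := matExp μ A
  have hAi (a b : m) : Integrable (fun ω => A ω a b) μ :=
    .of_bound (hA.matrix_entry a b).aestronglyMeasurable 1 <| hbd.mono fun ω hω =>
      (norm_entry_le_matOpNorm _ a b).trans hω
  have hAw := integrable_inner_toEuclideanCLM_apply hA hw hw2 hbd
  have hCw := integrable_inner_toEuclideanCLM_apply measurable_const hw hw2
    (ae_of_all μ fun _ => le_refl (matOpNorm C))
  have hAw_sq : Integrable (fun ω => ‖Matrix.toEuclideanCLM (𝕜 := ℂ) (A ω) (w ω)‖ ^ 2) μ := by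
    refine hw2.mono' ((hA.toEuclideanCLM_apply hw).norm.pow_const 2).aestronglyMeasurable ?_
    filter_upwards [hbd] with ω hω
    rw [Real.norm_of_nonneg (by positivity)]
    exact pow_le_pow_left₀ (norm_nonneg _) (norm_toEuclideanCLM_apply_le_norm hω _) 2
  calc ∫ ω, ‖Matrix.toEuclideanCLM (𝕜 := ℂ) (A ω) (w ω)‖ ^ 2 ∂μ
      ≤ ∫ ω, RCLike.re ⟪w ω, Matrix.toEuclideanCLM (𝕜 := ℂ) (A ω) (w ω)⟫_ℂ ∂μ := by
        refine integral_mono_ae hAw_sq hAw.re ?_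
        filter_upwards [hpsd, hbd] with ω hψ hω
        have hT := hψ.isPositive_toEuclideanCLM
        exact (hT.norm_apply_sq_le _).trans
          (mul_le_of_le_one_left (hT.re_inner_nonneg_right _) hω)
    _ = RCLike.re (∫ ω, ⟪w ω, Matrix.toEuclideanCLM (𝕜 := ℂ) (A ω) (w ω)⟫_ℂ ∂μ) :=
        integral_re hAw
    _ = RCLike.re (∫ ω, ⟪w ω, Matrix.toEuclideanCLM (𝕜 := ℂ) C (w ω)⟫_ℂ ∂μ) := by
        rw [integral_inner_toEuclideanCLM_of_indepFun hwA hw hw2 hAi]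
    _ = ∫ ω, RCLike.re ⟪w ω, Matrix.toEuclideanCLM (𝕜 := ℂ) C (w ω)⟫_ℂ ∂μ :=
        (integral_re hCw).symm
    _ ≤ ∫ ω, matOpNorm C * ‖w ω‖ ^ 2 ∂μ := by
        refine integral_mono hCw.re (hw2.const_mul _) fun ω => ?_
        calc RCLike.re ⟪w ω, Matrix.toEuclideanCLM (𝕜 := ℂ) C (w ω)⟫_ℂ
            ≤ ‖w ω‖ * (matOpNorm C * ‖w ω‖) := (re_inner_le_norm _ _).trans <| by
              gcongr; exact (Matrix.toEuclideanCLM (𝕜 := ℂ) C).le_opNorm _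
          _ = matOpNorm C * ‖w ω‖ ^ 2 := by ring
    _ = matOpNorm C * ∫ ω, ‖w ω‖ ^ 2 ∂μ := integral_const_mul _ _

end Expectation

section RandomProduct

variable {Ω : Type*} [MeasurableSpace Ω] {μ : Measure Ω} {n : ℕ}

theorem ae_matOpNorm_revProd_le_one {k : ℕ} {P : Fin k → Ω → Matrix (Fin n) (Fin n) ℂ}
    (hbd : ∀ i, ∀ᵐ ω ∂μ, matOpNorm (P i ω) ≤ 1) :
    ∀ᵐ ω ∂μ, matOpNorm (revProd fun i => P i ω) ≤ 1 := by
  filter_upwards [ae_all_iff.2 hbd] with ω hω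
  exact (matOpNorm_revProd_le _).trans <|
    Finset.prod_le_one (fun _ _ => norm_nonneg _) fun i _ => hω i

theorem integrable_norm_toEuclideanCLM_revProd_apply_sq [IsFiniteMeasure μ] {k : ℕ}
    {P : Fin k → Ω → Matrix (Fin n) (Fin n) ℂ} (hmeas : ∀ i, Measurable (P i))
    (hbd : ∀ i, ∀ᵐ ω ∂μ, matOpNorm (P i ω) ≤ 1) (v : EuclideanSpace ℂ (Fin n)) :
    Integrable (fun ω => ‖Matrix.toEuclideanCLM (𝕜 := ℂ) (revProd fun i => P i ω) v‖ ^ 2) μ := by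
  refine .of_bound (((measurable_revProd hmeas).toEuclideanCLM_apply
    measurable_const).norm.pow_const 2).aestronglyMeasurable (‖v‖ ^ 2) ?_
  filter_upwards [ae_matOpNorm_revProd_le_one hbd] with ω hω
  rw [Real.norm_of_nonneg (by positivity)]
  exact pow_le_pow_left₀ (norm_nonneg _) (norm_toEuclideanCLM_apply_le_norm hω v) 2

theorem integral_norm_sq_revProd_apply_le [IsProbabilityMeasure μ] {k : ℕ}
    {P : Fin k → Ω → Matrix (Fin n) (Fin n) ℂ} (hmeas : ∀ i, Measurable (P i))
    (hindep : iIndepFun P μ) (hpsd : ∀ i, ∀ᵐ ω ∂μ, (P i ω).PosSemidef)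
    (hbd : ∀ i, ∀ᵐ ω ∂μ, matOpNorm (P i ω) ≤ 1) (v : EuclideanSpace ℂ (Fin n)) :
    ∫ ω, ‖Matrix.toEuclideanCLM (𝕜 := ℂ) (revProd fun i => P i ω) v‖ ^ 2 ∂μ ≤
      (∏ i, matOpNorm (matExp μ (P i))) * ‖v‖ ^ 2 := by
  induction k with
  | zero => simp [revProd]
  | succ k ih =>
    set w := fun ω => Matrix.toEuclideanCLM (𝕜 := ℂ) (revProd fun i => P i.castSucc ω) v
    have hwP : IndepFun w (P (Fin.last k)) μ :=
      (hindep.indepFun_init_last hmeas).comp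
        ((measurable_revProd fun i => measurable_pi_apply i).toEuclideanCLM_apply
          measurable_const) measurable_id
    have ih := ih (fun i => hmeas i.castSucc) (hindep.precomp (Fin.castSucc_injective k))
      (fun i => hpsd i.castSucc) (fun i => hbd i.castSucc)
    calc ∫ ω, ‖Matrix.toEuclideanCLM (𝕜 := ℂ) (revProd fun i => P i ω) v‖ ^ 2 ∂μ
        = ∫ ω, ‖Matrix.toEuclideanCLM (𝕜 := ℂ) (P (Fin.last k) ω) (w ω)‖ ^ 2 ∂μ := by
          simp only [revProd_succ, map_mul, mul_apply_eq_comp]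
          rfl
      _ ≤ matOpNorm (matExp μ (P (Fin.last k))) * ∫ ω, ‖w ω‖ ^ 2 ∂μ :=
          integral_norm_sq_toEuclideanCLM_apply_le_of_indepFun hwP
            ((measurable_revProd fun i => hmeas _).toEuclideanCLM_apply measurable_const)
            (hmeas _) (integrable_norm_toEuclideanCLM_revProd_apply_sq (fun i => hmeas _)
              (fun i => hbd i.castSucc) v) (hpsd _) (hbd _)
      _ ≤ matOpNorm (matExp μ (P (Fin.last k))) *
            ((∏ i : Fin k, matOpNorm (matExp μ (P i.castSucc))) * ‖v‖ ^ 2) := by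
          gcongr
          exact norm_nonneg _
      _ = (∏ i, matOpNorm (matExp μ (P i))) * ‖v‖ ^ 2 := by
          rw [Fin.prod_univ_castSucc]
          ring

end RandomProduct

theorem meas_norm_ge_le_integral_sq_div {Ω E : Type*} [MeasurableSpace Ω]
    [NormedAddCommGroup E] {μ : Measure Ω} [IsFiniteMeasure μ] {X : Ω → E}
    (hX : Integrable (fun ω => ‖X ω‖ ^ 2) μ) {t : ℝ} (ht : 0 < t) :
    μ {ω | t ≤ ‖X ω‖} ≤ ENNReal.ofReal ((∫ ω, ‖X ω‖ ^ 2 ∂μ) / t ^ 2) := by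
  have hset : {ω | t ≤ ‖X ω‖} = {ω | t ^ 2 ≤ ‖X ω‖ ^ 2} := by
    ext ω
    exact (pow_le_pow_iff_left₀ ht.le (norm_nonneg _) two_ne_zero).symm
  have hmarkov := mul_meas_ge_le_integral_of_nonneg
    (ae_of_all μ fun ω => sq_nonneg ‖X ω‖) hX (t ^ 2)
  rw [← ofReal_measureReal, hset]
  exact ENNReal.ofReal_le_ofReal <| (le_div_iff₀ (by positivity)).2 <| by linarith

theorem prod_le_exp_neg_mul {k : ℕ} {a : Fin k → ℝ} {δ : ℝ} (ha₀ : ∀ i, 0 ≤ a i)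
    (ha : ∀ i, a i ≤ 1 - δ) : ∏ i, a i ≤ Real.exp (-(k * δ)) :=
  calc ∏ i, a i ≤ ∏ _ : Fin k, Real.exp (-δ) :=
        Finset.prod_le_prod (fun i _ => ha₀ i) fun i _ =>
          (ha i).trans (by linarith [Real.add_one_le_exp (-δ)])
    _ = Real.exp (-(k * δ)) := by
        rw [Finset.prod_const, Finset.card_univ, Fintype.card_fin, ← Real.exp_nat_mul]
        ring_nf

theorem sq_div_mul_log_two_le {Δ k : ℝ} (hΔ : 0 ≤ Δ) (hΔk : Δ ≤ k / 2) :
    Δ ^ 2 / (2 * k * Real.log 2) ≤ 2 * Δ := by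
  have hlog := Real.log_two_gt_d9
  rcases hΔ.eq_or_lt with rfl | hΔpos
  · simp
  have hk : 0 < k := by linarith
  rw [div_le_iff₀ (by positivity)]
  nlinarith [mul_le_mul_of_nonneg_left hΔk hΔ]

theorem operator_product_vector_tail_general {Ω : Type*} [MeasurableSpace Ω] (μ : Measure Ω)
    [IsProbabilityMeasure μ] {n k : ℕ}
    (P : Fin k → Ω → Matrix (Fin n) (Fin n) ℂ)
    (hmeas : ∀ i, Measurable (P i))
    (hindep : iIndepFun P μ)
    (hpsd : ∀ i, ∀ᵐ ω ∂μ, (P i ω).PosSemidef)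
    (hbd : ∀ i, ∀ᵐ ω ∂μ, matOpNorm (P i ω) ≤ 1)
    {δ : ℝ} (hδ1 : δ ≤ 1)
    (hexp : ∀ i, matOpNorm (matExp μ (P i)) ≤ 1 - δ)
    (v : EuclideanSpace ℂ (Fin n)) (hv : ‖v‖ = 1)
    {Δ : ℝ} (hΔ : 0 ≤ Δ) :
    μ {ω | Real.exp (-(k * δ) / 2 + Δ) ≤
        ‖Matrix.toEuclideanCLM (𝕜 := ℂ) (revProd fun i => P i ω) v‖} ≤
      ENNReal.ofReal (Real.exp (-Δ ^ 2 / (2 * k * Real.log 2))) := by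
  set t := Real.exp (-(k * δ) / 2 + Δ)
  set X := fun ω => Matrix.toEuclideanCLM (𝕜 := ℂ) (revProd fun i => P i ω) v
  have hX : ∀ᵐ ω ∂μ, ‖X ω‖ ≤ 1 := (ae_matOpNorm_revProd_le_one hbd).mono fun ω hω =>
    (norm_toEuclideanCLM_apply_le_norm hω v).trans hv.le
  rcases le_or_gt Δ (k * δ / 2) with hsmall | hlarge
  · have hmoment : ∫ ω, ‖X ω‖ ^ 2 ∂μ ≤ Real.exp (-(k * δ)) := by
      have h := integral_norm_sq_revProd_apply_le hmeas hindep hpsd hbd v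
      rw [hv, one_pow, mul_one] at h
      exact h.trans (prod_le_exp_neg_mul (fun _ => norm_nonneg _) hexp)
    calc μ {ω | t ≤ ‖X ω‖}
        ≤ ENNReal.ofReal ((∫ ω, ‖X ω‖ ^ 2 ∂μ) / t ^ 2) :=
          meas_norm_ge_le_integral_sq_div
            (integrable_norm_toEuclideanCLM_revProd_apply_sq hmeas hbd v) (Real.exp_pos _)
      _ ≤ ENNReal.ofReal (Real.exp (-(k * δ)) / t ^ 2) := by gcongr
      _ = ENNReal.ofReal (Real.exp (-(2 * Δ))) := by
          rw [sq, ← Real.exp_add, ← Real.exp_sub]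
          ring_nf
      _ ≤ ENNReal.ofReal (Real.exp (-Δ ^ 2 / (2 * k * Real.log 2))) := by
          gcongr
          rw [neg_div, neg_le_neg_iff]
          exact sq_div_mul_log_two_le hΔ (by nlinarith [(Nat.cast_nonneg k : (0 : ℝ) ≤ k)])
  · have hlt : 1 < t := Real.one_lt_exp_iff.2 (by linarith)
    refine (measure_mono_null (fun ω hω => ?_) (ae_iff.1 hX)).le.trans zero_le
    exact not_le.2 (hlt.trans_le hω)

/-- the vector form inside the proof of Theorem 3: if `P_1, …, P_k` are
independent random positive-semidefinite operators on an `n`-dimensional complex Hilbert space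
with `‖P_i‖ ≤ 1` a.s. and `‖E[P_i]‖ ≤ 1 − δ`, then for every unit vector `v` and `Δ ≥ 0`,
`Pr[‖P_k ⋯ P_1 v‖ ≥ exp(−kδ/2 + Δ)] ≤ exp(−Δ²/(2k ln 2))`. -/
theorem operator_product_vector_tail {Ω : Type*} [MeasurableSpace Ω] (μ : Measure Ω)
    [IsProbabilityMeasure μ] {n k : ℕ}
    (P : Fin k → Ω → Matrix (Fin n) (Fin n) ℂ)
    (hmeas : ∀ i, Measurable (P i))
    (hindep : iIndepFun P μ)
    (hpsd : ∀ i, ∀ᵐ ω ∂μ, (P i ω).PosSemidef)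
    (hbd : ∀ i, ∀ᵐ ω ∂μ, matOpNorm (P i ω) ≤ 1)
    {δ : ℝ} (hδ0 : 0 ≤ δ) (hδ1 : δ ≤ 1)
    (hexp : ∀ i, matOpNorm (matExp μ (P i)) ≤ 1 - δ)
    (v : EuclideanSpace ℂ (Fin n)) (hv : ‖v‖ = 1)
    {Δ : ℝ} (hΔ : 0 ≤ Δ) :
    μ {ω | Real.exp (-(k * δ) / 2 + Δ) ≤
        ‖Matrix.toEuclideanCLM (𝕜 := ℂ) (revProd fun i => P i ω) v‖} ≤
      ENNReal.ofReal (Real.exp (-Δ ^ 2 / (2 * k * Real.log 2))) :=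
  operator_product_vector_tail_general μ P hmeas hindep hpsd hbd hδ1 hexp v hv hΔ
end

section
/- Let G be a finite group with |G| ≥ 2, let n ≥ 1, let S be a nonempty finite multiset of elements of (ℤ_{|G|})^n that is ε-biased over (ℤ_{|G|})^n, and let ρ_1, …, ρ_n be irreducible unitary representations of G. Then for every g ∈ G, ‖ (1/|S|) Σ_{(s_1,…,s_n)∈S} ρ_1(g^{s_1}) ⊗ ⋯ ⊗ ρ_n(g^{s_n}) − Π_g^{ρ_1} ⊗ ⋯ ⊗ Π_g^{ρ_n} ‖ ≤ ε. -/
/-!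
The map `s ↦ ρ₁(g^{s₁}) ⊗ ⋯ ⊗ ρₙ(g^{sₙ})` is a unitary representation `T` of the finite abelian
group `A = (ℤ_{|G|})ⁿ`. For each character `ψ` of `A`, `Pψ = 𝔼ₐ ψ(a)⁻¹ T(a)` is the orthogonal
projection onto the `ψ`-isotypic component: `T(a) Pψ = ψ(a) Pψ`, the `Pψ` are self-adjoint,
pairwise orthogonal and sum to `1`. Hence the average of `T` over `S` is `∑ψ ĉ(ψ) Pψ`, where
`ĉ(ψ)` is the average of `ψ` over `S`, while the average over all of `A` is
`P₁ = Π_g^{ρ₁} ⊗ ⋯ ⊗ Π_g^{ρₙ}`. Their difference `∑_{ψ ≠ 1} ĉ(ψ) Pψ` has norm at most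
`max_{ψ ≠ 1} |ĉ(ψ)| ≤ ε` by Pythagoras.
-/

open scoped BigOperators

/-- A multiset over an (additive) abelian group is `ε`-biased if every nontrivial
character averages to a complex number of modulus at most `ε` over `S`. -/
def IsEpsBiasedAdd {M : Type*} [AddCommGroup M] (S : Multiset M) (ε : ℝ) : Prop :=
  ∀ χ : AddChar M ℂ, χ ≠ 1 → ‖(Multiset.card S : ℂ)⁻¹ * (S.map fun s => χ s).sum‖ ≤ ε

/-- The `n`-fold Kronecker (tensor) product of square matrices `M i`, as a matrix indexed by
the product of the index types: `(⊗ᵢ Mᵢ)(a, b) = ∏ᵢ Mᵢ(aᵢ, bᵢ)`. -/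
noncomputable def piKron {n : ℕ} {d : Fin n → ℕ}
    (M : ∀ i, Matrix (Fin (d i)) (Fin (d i)) ℂ) :
    Matrix (∀ i, Fin (d i)) (∀ i, Fin (d i)) ℂ :=
  Matrix.of fun a b => ∏ i, M i (a i) (b i)

open scoped InnerProductSpace

section Hilbert
variable {𝕜 ι E : Type*} [RCLike 𝕜] [Fintype ι] [NormedAddCommGroup E] [InnerProductSpace 𝕜 E]

lemma norm_sum_sq_eq_sum_norm_sq_of_pairwise_inner_eq_zero {w : ι → E}
    (hw : Pairwise fun i j => ⟪w i, w j⟫_𝕜 = 0) : ‖∑ i, w i‖ ^ 2 = ∑ i, ‖w i‖ ^ 2 := by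
  have h : ((‖∑ i, w i‖ ^ 2 : ℝ) : 𝕜) = ∑ i, ((‖w i‖ ^ 2 : ℝ) : 𝕜) := by
    simp only [RCLike.ofReal_pow, ← inner_self_eq_norm_sq_to_K, sum_inner, inner_sum]
    exact Finset.sum_congr rfl fun i _ =>
      Finset.sum_eq_single i (fun j _ hji => hw hji) (by simp)
  exact_mod_cast h

theorem ContinuousLinearMap.norm_sum_smul_le_of_pairwise_mul_eq_zero [CompleteSpace E]
    {Q : ι → E →L[𝕜] E} (hQ : Pairwise fun i j => Q i * Q j = 0)
    (hQ_sa : ∀ i, IsSelfAdjoint (Q i)) (hQ_sum : ∑ i, Q i = 1) {z : ι → 𝕜} {ε : ℝ}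
    (hε : 0 ≤ ε) (hz : ∀ i, ‖z i‖ ≤ ε) : ‖∑ i, z i • Q i‖ ≤ ε := by
  refine opNorm_le_bound _ hε fun v => ?_
  have horth : Pairwise fun i j => ⟪Q i v, Q j v⟫_𝕜 = 0 := fun i j hij =>
    calc ⟪Q i v, Q j v⟫_𝕜 = ⟪v, (Q i * Q j) v⟫_𝕜 := (hQ_sa i).isSymmetric _ _
      _ = 0 := by rw [hQ hij, zero_apply, inner_zero_right]
  have hv : ‖v‖ ^ 2 = ∑ i, ‖Q i v‖ ^ 2 := by
    rw [← norm_sum_sq_eq_sum_norm_sq_of_pairwise_inner_eq_zero horth, ← sum_apply, hQ_sum,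
      one_apply_eq_self]
  have hXv : ‖(∑ i, z i • Q i) v‖ ^ 2 = ∑ i, ‖z i‖ ^ 2 * ‖Q i v‖ ^ 2 := by
    have hzorth : Pairwise fun i j => ⟪z i • Q i v, z j • Q j v⟫_𝕜 = 0 := fun i j hij => by
      simp only [inner_smul_left, inner_smul_right, horth hij, mul_zero]
    simp only [sum_apply, smul_apply, norm_sum_sq_eq_sum_norm_sq_of_pairwise_inner_eq_zero hzorth,
      norm_smul, mul_pow]
  refine (pow_le_pow_iff_left₀ (norm_nonneg _) (by positivity) two_ne_zero).1 ?_
  calc ‖(∑ i, z i • Q i) v‖ ^ 2 = ∑ i, ‖z i‖ ^ 2 * ‖Q i v‖ ^ 2 := hXv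
    _ ≤ ∑ i, ε ^ 2 * ‖Q i v‖ ^ 2 := by gcongr with i; exact hz i
    _ = (ε * ‖v‖) ^ 2 := by rw [mul_pow, hv, Finset.mul_sum]

end Hilbert

lemma AddChar.star_apply_of_mem_unitary {A M : Type*} [AddGroup A] [Monoid M] [StarMul M]
    (T : AddChar A M) (hT : ∀ a, T a ∈ unitary M) (a : A) : star (T a) = T (-a) :=
  calc star (T a) = star (T a) * (T a * T (-a)) := by
        rw [← T.map_add_eq_mul, add_neg_cancel, T.map_zero_eq_one, mul_one]
    _ = T (-a) := by rw [← mul_assoc, Unitary.star_mul_self_of_mem (hT a), one_mul]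

section isotypicProj
variable {A R : Type*} [AddCommGroup A] [Fintype A] [Ring R] [Algebra ℂ R]

noncomputable def isotypicProj (T : AddChar A R) (ψ : AddChar A ℂ) : R :=
  (Fintype.card A : ℂ)⁻¹ • ∑ a, ψ⁻¹ a • T a

variable (T : AddChar A R)

lemma isotypicProj_one : isotypicProj T 1 = (Fintype.card A : ℂ)⁻¹ • ∑ a, T a := by
  simp only [isotypicProj, inv_one, AddChar.one_apply, one_smul]

lemma mul_isotypicProj (ψ : AddChar A ℂ) (a : A) :
    T a * isotypicProj T ψ = ψ a • isotypicProj T ψ := by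
  have hshift : ∑ b, ψ⁻¹ b • T (a + b) = ∑ b, ψ⁻¹ (b - a) • T b :=
    Fintype.sum_equiv (Equiv.addLeft a) _ _ fun b => by simp
  calc T a * isotypicProj T ψ
      = (Fintype.card A : ℂ)⁻¹ • ∑ b, ψ⁻¹ b • T (a + b) := by
        simp only [isotypicProj, mul_smul_comm, Finset.mul_sum, AddChar.map_add_eq_mul]
    _ = ψ a • isotypicProj T ψ := by
        rw [hshift, isotypicProj, smul_comm (ψ a), Finset.smul_sum (r := ψ a)]
        congr 1
        refine Finset.sum_congr rfl fun b _ => ?_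
        rw [sub_eq_add_neg, AddChar.map_add_eq_mul, AddChar.inv_apply ψ (-a), neg_neg, mul_comm,
          mul_smul]

lemma isotypicProj_mul_of_ne {ψ φ : AddChar A ℂ} (h : ψ ≠ φ) :
    isotypicProj T ψ * isotypicProj T φ = 0 := by
  have hsum : ∑ a, (ψ⁻¹ * φ) a = 0 :=
    AddChar.sum_eq_zero_iff_ne_zero.2 (mt inv_mul_eq_one.1 h)
  rw [isotypicProj, smul_mul_assoc, Finset.sum_mul]
  simp only [smul_mul_assoc, mul_isotypicProj T, smul_smul, ← Finset.sum_smul]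
  simp only [← AddChar.mul_apply, hsum, mul_zero, zero_smul]

lemma sum_isotypicProj [DecidableEq A] : ∑ ψ : AddChar A ℂ, isotypicProj T ψ = 1 := by
  simp only [isotypicProj, ← Finset.smul_sum]
  rw [Finset.sum_comm]
  simp only [← Finset.sum_smul, AddChar.inv_apply, AddChar.sum_apply_eq_ite, neg_eq_zero,
    ite_smul, zero_smul, Finset.sum_ite_eq', Finset.mem_univ, if_true, smul_smul]
  rw [inv_mul_cancel₀ (Nat.cast_ne_zero.2 Fintype.card_ne_zero), one_smul, T.map_zero_eq_one]

lemma isSelfAdjoint_isotypicProj [StarRing R] [StarModule ℂ R] (hT : ∀ a, T a ∈ unitary R)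
    (ψ : AddChar A ℂ) : IsSelfAdjoint (isotypicProj T ψ) := by
  have hneg : ∑ a, ψ a • T (-a) = ∑ a, ψ⁻¹ a • T a :=
    Fintype.sum_equiv (Equiv.neg A) _ _ fun a => by simp
  rw [IsSelfAdjoint, isotypicProj, star_smul, star_sum]
  simp only [star_smul, T.star_apply_of_mem_unitary hT, AddChar.inv_apply, AddChar.map_neg_eq_conj,
    RCLike.star_def, RCLike.conj_conj, star_inv₀, star_natCast, hneg]

lemma multiset_avg_eq_sum_smul_isotypicProj (S : Multiset A) :
    (Multiset.card S : ℂ)⁻¹ • (S.map T).sum =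
      ∑ ψ : AddChar A ℂ, ((Multiset.card S : ℂ)⁻¹ * (S.map ψ).sum) • isotypicProj T ψ := by
  classical
  calc (Multiset.card S : ℂ)⁻¹ • (S.map T).sum
      = (Multiset.card S : ℂ)⁻¹ • (S.map T).sum * ∑ ψ : AddChar A ℂ, isotypicProj T ψ := by
        rw [sum_isotypicProj, mul_one]
    _ = _ := by
        rw [Finset.mul_sum]
        refine Finset.sum_congr rfl fun ψ _ => ?_
        simp only [smul_mul_assoc, ← Multiset.sum_map_mul_right, mul_isotypicProj T, mul_smul,
          Multiset.sum_smul, Multiset.map_map]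
        rfl

end isotypicProj

lemma IsEpsBiasedAdd.nonneg {M : Type*} [AddCommGroup M] [Finite M] [Nontrivial M]
    {S : Multiset M} {ε : ℝ} (h : IsEpsBiasedAdd S ε) : 0 ≤ ε := by
  obtain ⟨a, ha⟩ := exists_ne (0 : M)
  obtain ⟨ψ, hψ⟩ := AddChar.exists_apply_ne_zero.2 ha
  exact (norm_nonneg _).trans (h ψ fun h1 => hψ (by rw [h1, AddChar.one_apply]))

theorem norm_multiset_avg_sub_avg_le_of_isEpsBiasedAdd {A E : Type*} [AddCommGroup A] [Fintype A]
    [Nontrivial A] [NormedAddCommGroup E] [InnerProductSpace ℂ E] [CompleteSpace E]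
    (T : AddChar A (E →L[ℂ] E)) (hT : ∀ a, T a ∈ unitary (E →L[ℂ] E)) {S : Multiset A}
    (hS : S ≠ 0) {ε : ℝ} (hbias : IsEpsBiasedAdd S ε) :
    ‖(Multiset.card S : ℂ)⁻¹ • (S.map T).sum - (Fintype.card A : ℂ)⁻¹ • ∑ a, T a‖ ≤ ε := by
  classical
  have hε := hbias.nonneg
  set c : AddChar A ℂ → ℂ := fun ψ => (Multiset.card S : ℂ)⁻¹ * (S.map ψ).sum
  have hc_one : c 1 = 1 := by
    simp only [c, AddChar.coe_one, Pi.one_def, Multiset.map_const', Multiset.sum_replicate,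
      nsmul_eq_mul, mul_one]
    exact inv_mul_cancel₀ (Nat.cast_ne_zero.2 (mt Multiset.card_eq_zero.1 hS))
  have hdecomp : (Multiset.card S : ℂ)⁻¹ • (S.map T).sum - (Fintype.card A : ℂ)⁻¹ • ∑ a, T a =
      ∑ ψ, (c ψ - if ψ = 1 then 1 else 0) • isotypicProj T ψ := by
    simp only [multiset_avg_eq_sum_smul_isotypicProj, ← isotypicProj_one, sub_smul,
      Finset.sum_sub_distrib, ite_smul, one_smul, zero_smul, Finset.sum_ite_eq', Finset.mem_univ,
      if_true, c]
  rw [hdecomp]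
  refine ContinuousLinearMap.norm_sum_smul_le_of_pairwise_mul_eq_zero
    (fun ψ φ h => isotypicProj_mul_of_ne T h) (isSelfAdjoint_isotypicProj T hT) (sum_isotypicProj T)
    hε fun ψ => ?_
  by_cases hψ : ψ = 1
  · rw [if_pos hψ, hψ, hc_one, sub_self, norm_zero]
    exact hε
  · rw [if_neg hψ, sub_zero]
    exact hbias ψ hψ


section piKron
variable {n : ℕ} {d : Fin n → ℕ}

lemma piKron_mul (M N : ∀ i, Matrix (Fin (d i)) (Fin (d i)) ℂ) :
    piKron M * piKron N = piKron fun i => M i * N i := by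
  ext a b
  simp only [piKron, Matrix.mul_apply, Matrix.of_apply]
  rw [Finset.prod_univ_sum, Fintype.piFinset_univ]
  exact Finset.sum_congr rfl fun c _ => Finset.prod_mul_distrib.symm

lemma piKron_one : piKron (fun i => (1 : Matrix (Fin (d i)) (Fin (d i)) ℂ)) = 1 := by
  ext a b
  simp only [piKron, Matrix.of_apply, Matrix.one_apply]
  by_cases h : a = b
  · subst h; simp
  · obtain ⟨i, hi⟩ := Function.ne_iff.mp h
    rw [if_neg h]
    exact Finset.prod_eq_zero (Finset.mem_univ i) (if_neg hi)

lemma star_piKron (M : ∀ i, Matrix (Fin (d i)) (Fin (d i)) ℂ) :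
    star (piKron M) = piKron fun i => star (M i) := by
  ext a b
  simp [piKron, Matrix.star_apply]

lemma piKron_mem_unitary {M : ∀ i, Matrix (Fin (d i)) (Fin (d i)) ℂ}
    (hM : ∀ i, M i ∈ unitary _) : piKron M ∈ unitary _ := by
  rw [Unitary.mem_iff, star_piKron, piKron_mul, piKron_mul]
  simp only [Unitary.star_mul_self_of_mem (hM _), Unitary.mul_star_self_of_mem (hM _), piKron_one,
    and_self]

lemma piKron_smul (c : ℂ) (M : ∀ i, Matrix (Fin (d i)) (Fin (d i)) ℂ) :
    piKron (fun i => c • M i) = c ^ n • piKron M := by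
  ext a b
  simp only [piKron, Matrix.of_apply, Matrix.smul_apply, smul_eq_mul,
    Finset.prod_mul_distrib, Finset.prod_const, Finset.card_univ, Fintype.card_fin]

lemma piKron_sum {α : Type*} [Fintype α] (M : ∀ i, α → Matrix (Fin (d i)) (Fin (d i)) ℂ) :
    piKron (fun i => ∑ x, M i x) = ∑ f : Fin n → α, piKron fun i => M i (f i) := by
  ext a b
  simp only [piKron, Matrix.of_apply, Matrix.sum_apply]
  rw [Finset.prod_univ_sum, Fintype.piFinset_univ]

noncomputable def AddChar.piKron {A : Type*} [AddMonoid A]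
    (χ : ∀ i, AddChar A (Matrix (Fin (d i)) (Fin (d i)) ℂ)) :
    AddChar (Fin n → A) (Matrix (∀ i, Fin (d i)) (∀ i, Fin (d i)) ℂ) where
  toFun s := _root_.piKron fun i => χ i (s i)
  map_zero_eq_one' := by simp only [Pi.zero_apply, AddChar.map_zero_eq_one, piKron_one]
  map_add_eq_mul' s t := by simp only [Pi.add_apply, AddChar.map_add_eq_mul, piKron_mul]

end piKron

/-- Unlike `AddChar.zmodChar`, the target need not be commutative. -/
def AddChar.zmodPow {G : Type*} [Monoid G] {m : ℕ} [NeZero m] (g : G) (hg : g ^ m = 1) :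
    AddChar (ZMod m) G where
  toFun x := g ^ x.val
  map_zero_eq_one' := by rw [ZMod.val_zero, pow_zero]
  map_add_eq_mul' x y := by rw [ZMod.val_add, ← pow_eq_pow_mod _ hg, pow_add]

lemma ZMod.sum_comp_val {M : Type*} [AddCommMonoid M] (m : ℕ) [NeZero m] (f : ℕ → M) :
    ∑ x : ZMod m, f x.val = ∑ t ∈ Finset.range m, f t := by
  refine Finset.sum_nbij ZMod.val (fun x _ => Finset.mem_range.2 x.val_lt)
    (fun x _ y _ h => ZMod.val_injective m h) (fun t ht => ⟨t, Finset.mem_univ _, ?_⟩)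
    (fun _ _ => rfl)
  exact ZMod.val_cast_of_lt (Finset.mem_range.1 ht)

lemma cyclicProj_eq_sum_zmod {G : Type*} [Group G] [Fintype G] {d : ℕ}
    (ρ : G →* Matrix.unitaryGroup (Fin d) ℂ) (g : G) :
    cyclicProj ρ g = (Fintype.card G : ℂ)⁻¹ •
      ∑ x : ZMod (Fintype.card G), (ρ (g ^ x.val) : Matrix (Fin d) (Fin d) ℂ) := by
  rw [cyclicProj, ← ZMod.sum_comp_val]

theorem avg_tensor_close_to_proj_general {G : Type*} [Group G] [Fintype G]
    (hG : 2 ≤ Fintype.card G) {n : ℕ} (hn : 1 ≤ n)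
    (S : Multiset (Fin n → ZMod (Fintype.card G))) (hS : S ≠ 0) {ε : ℝ}
    (hbias : IsEpsBiasedAdd S ε) {d : Fin n → ℕ}
    (ρ : ∀ i, G →* Matrix.unitaryGroup (Fin (d i)) ℂ) (g : G) :
    matOpNorm
      ((Multiset.card S : ℂ)⁻¹ •
          (S.map fun s =>
            piKron fun i => (ρ i (g ^ (s i).val) : Matrix (Fin (d i)) (Fin (d i)) ℂ)).sum -
        piKron fun i => cyclicProj (ρ i) g) ≤ ε := by
  have : Fact (1 < Fintype.card G) := ⟨hG⟩
  have : Nonempty (Fin n) := ⟨⟨0, hn⟩⟩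
  let T := AddChar.piKron fun i =>
    ((Matrix.unitaryGroup (Fin (d i)) ℂ).subtype.comp (ρ i)).compAddChar
      (AddChar.zmodPow g pow_card_eq_one)
  have hT : ∀ s, T s ∈ unitary _ := fun s => piKron_mem_unitary fun i => (ρ i _).2
  have hproj : (piKron fun i => cyclicProj (ρ i) g) =
      (Fintype.card (Fin n → ZMod (Fintype.card G)) : ℂ)⁻¹ • ∑ s, T s := by
    simp only [cyclicProj_eq_sum_zmod, piKron_smul, piKron_sum, Fintype.card_pi, ZMod.card,
      Finset.prod_const, Finset.card_univ, Fintype.card_fin, Nat.cast_pow, inv_pow]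
    rfl
  let Φ := Matrix.toEuclideanCLM (𝕜 := ℂ) (n := ∀ i, Fin (d i))
  have key := norm_multiset_avg_sub_avg_le_of_isEpsBiasedAdd
    ((MonoidHomClass.toMonoidHom Φ).compAddChar T) (fun s => Unitary.map_mem Φ (hT s)) hS hbias
  rw [matOpNorm, hproj, map_sub, map_smul, map_smul, map_multiset_sum, map_sum, Multiset.map_map]
  exact key

/-- the error estimate in the proof of Theorem 1: if `S` is `ε`-biased
over `(ℤ_{|G|})^n`, then for irreducible unitary representations `ρ_1, …, ρ_n` of `G` and any
`g ∈ G`, the average of `ρ_1(g^{s_1}) ⊗ ⋯ ⊗ ρ_n(g^{s_n})` over `s ∈ S` is within `ε`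
(in operator norm) of `Π_g^{ρ_1} ⊗ ⋯ ⊗ Π_g^{ρ_n}`. -/
theorem avg_tensor_close_to_proj {G : Type*} [Group G] [Fintype G]
    (hG : 2 ≤ Fintype.card G) {n : ℕ} (hn : 1 ≤ n)
    (S : Multiset (Fin n → ZMod (Fintype.card G))) (hS : S ≠ 0) {ε : ℝ}
    (hbias : IsEpsBiasedAdd S ε) {d : Fin n → ℕ}
    (ρ : ∀ i, G →* Matrix.unitaryGroup (Fin (d i)) ℂ)
    (hirr : ∀ i, IsIrreducibleRep (ρ i)) (g : G) :
    matOpNorm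
      ((Multiset.card S : ℂ)⁻¹ •
          (S.map fun s =>
            piKron fun i => (ρ i (g ^ (s i).val) : Matrix (Fin (d i)) (Fin (d i)) ℂ)).sum -
        piKron fun i => cyclicProj (ρ i) g) ≤ ε :=
  avg_tensor_close_to_proj_general hG hn S hS hbias ρ g
end
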